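/- arXiv:2006.00953 — 2 statements merged into one kernel-verified Lean document; each statement's English description precedes it below -/
import Mathlib

section
/- For all real numbers a ≥ b, all p ≥ 1, ρ ≥ p and k > 0, one has (p^p(ρ+1−p)/ρ^p) · (a·|a|_k^{ρ/p−1} − b·|b|_k^{ρ/p−1})^p ≤ (a·|a|_k^{ρ−p} − b·|b|_k^{ρ−p}) · (a−b)^{p−1}, where for t∈ℝ the truncation is |t|_k := min{|t|, k}. -/
noncomputable section

/-- The truncation `|t|_k = min{|t|, k}`. -/
def trunc (k t : ℝ) : ℝ := min |t| k

/-!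
Write `F_c t = t * |t|_k ^ c`. Away from `t = 0, ±k` it has derivative `g_c t`, equal to
`(c + 1) |t| ^ c` for `|t| < k` and to `k ^ c` for `|t| > k`, so `F_c a - F_c b = ∫_b^a g_c`.
Jensen's inequality for `x ↦ x ^ p` gives `(∫_b^a g_c) ^ p ≤ (a - b) ^ (p - 1) ∫_b^a g_c ^ p`,
and pointwise `(c p + 1) / (c + 1) ^ p * g_c ^ p ≤ g_{c p}`: with equality where `|t| < k`, and by
Bernoulli's inequality `c p + 1 ≤ (c + 1) ^ p` where `|t| > k`. Taking `c = ρ / p - 1` gives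
`c p = ρ - p` and `(c p + 1) / (c + 1) ^ p = p ^ p (ρ + 1 - p) / ρ ^ p`.
-/

open MeasureTheory Set Real

theorem rpow_integral_le_mul_integral_rpow {α : Type*} [MeasurableSpace α] {μ : Measure α}
    [IsFiniteMeasure μ] {f : α → ℝ} {p : ℝ} (hp : 1 ≤ p) (hf : 0 ≤ᵐ[μ] f)
    (hfi : Integrable f μ) (hfpi : Integrable (fun x ↦ f x ^ p) μ) :
    (∫ x, f x ∂μ) ^ p ≤ μ.real univ ^ (p - 1) * ∫ x, f x ^ p ∂μ := by
  rcases eq_zero_or_neZero μ with rfl | _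
  · simp [zero_rpow (by linarith : p ≠ 0)]
  have hm : 0 < μ.real univ := measureReal_univ_pos
  have hjensen : ((∫ x, f x ∂μ) / μ.real univ) ^ p ≤ (∫ x, f x ^ p ∂μ) / μ.real univ := by
    have := (convexOn_rpow hp).map_average_le
      (fun x _ ↦ (continuousAt_rpow_const x p (Or.inr (by linarith))).continuousWithinAt)
      isClosed_Ici hf hfi hfpi
    simpa only [average_eq, smul_eq_mul, inv_mul_eq_div] using this
  rw [div_rpow (integral_nonneg_of_ae hf) hm.le, div_le_div_iff₀ (by positivity) hm] at hjensen
  rw [rpow_sub_one hm.ne', div_mul_eq_mul_div, le_div_iff₀ hm]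
  linarith

theorem hasDerivAt_mul_abs_rpow (c : ℝ) {t : ℝ} (ht : t ≠ 0) :
    HasDerivAt (fun u ↦ u * |u| ^ c) ((c + 1) * |t| ^ c) t := by
  refine ((hasDerivAt_id t).mul
    ((hasDerivAt_abs ht).rpow_const (p := c) (Or.inl (abs_ne_zero.2 ht)))).congr_deriv ?_
  have h : t * SignType.sign t * |t| ^ (c - 1) = |t| ^ c := by
    rw [self_mul_sign, rpow_sub_one (abs_ne_zero.2 ht), mul_div_cancel₀ _ (abs_ne_zero.2 ht)]
  simp only [id]
  linear_combination c * h

def mulTruncRpowDeriv (k c t : ℝ) : ℝ := if |t| < k then (c + 1) * |t| ^ c else k ^ c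

section
variable {k c p : ℝ}

theorem hasDerivAt_mul_trunc_rpow {t : ℝ} (ht : t ≠ 0) (htk : |t| ≠ k) :
    HasDerivAt (fun u ↦ u * trunc k u ^ c) (mulTruncRpowDeriv k c t) t := by
  have habs : Filter.Tendsto (|·|) (nhds t) (nhds |t|) := continuous_abs.tendsto t
  rcases htk.lt_or_gt with h | h
  · rw [mulTruncRpowDeriv, if_pos h]
    refine (hasDerivAt_mul_abs_rpow c ht).congr_of_eventuallyEq ?_
    filter_upwards [habs.eventually_lt_const h] with u hu
    rw [trunc, min_eq_left hu.le]
  · rw [mulTruncRpowDeriv, if_neg h.not_gt]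
    refine ((hasDerivAt_id t).mul_const (k ^ c)).congr_deriv (one_mul _)
      |>.congr_of_eventuallyEq ?_
    filter_upwards [habs.eventually_const_lt h] with u hu
    rw [trunc, min_eq_right hu.le, id]

theorem continuous_mul_trunc_rpow (hc : 0 ≤ c) : Continuous (fun t ↦ t * trunc k t ^ c) :=
  continuous_id.mul ((continuous_abs.min continuous_const).rpow_const fun _ ↦ Or.inr hc)

theorem measurable_mulTruncRpowDeriv : Measurable (mulTruncRpowDeriv k c) :=
  Measurable.ite (measurableSet_lt measurable_abs measurable_const) (by fun_prop) measurable_const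

theorem mulTruncRpowDeriv_nonneg (hk : 0 ≤ k) (hc : 0 ≤ c) (t : ℝ) :
    0 ≤ mulTruncRpowDeriv k c t := by
  unfold mulTruncRpowDeriv; split_ifs <;> positivity

theorem mulTruncRpowDeriv_le (hk : 0 ≤ k) (hc : 0 ≤ c) (t : ℝ) :
    mulTruncRpowDeriv k c t ≤ (c + 1) * k ^ c := by
  unfold mulTruncRpowDeriv
  split_ifs with h
  · gcongr
  · nlinarith [rpow_nonneg hk c]

theorem integrable_mulTruncRpowDeriv_rpow {μ : Measure ℝ} [IsFiniteMeasure μ] (hk : 0 ≤ k)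
    (hc : 0 ≤ c) {q : ℝ} (hq : 0 ≤ q) : Integrable (fun t ↦ mulTruncRpowDeriv k c t ^ q) μ := by
  refine .of_bound (measurable_mulTruncRpowDeriv.pow_const q).aestronglyMeasurable
    (((c + 1) * k ^ c) ^ q) (ae_of_all _ fun t ↦ ?_)
  rw [norm_of_nonneg (rpow_nonneg (mulTruncRpowDeriv_nonneg hk hc t) q)]
  exact rpow_le_rpow (mulTruncRpowDeriv_nonneg hk hc t) (mulTruncRpowDeriv_le hk hc t) hq

theorem integrable_mulTruncRpowDeriv {μ : Measure ℝ} [IsFiniteMeasure μ] (hk : 0 ≤ k)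
    (hc : 0 ≤ c) :
    Integrable (mulTruncRpowDeriv k c) μ := by
  simpa using integrable_mulTruncRpowDeriv_rpow (μ := μ) hk hc zero_le_one

theorem integral_mulTruncRpowDeriv (hk : 0 ≤ k) (hc : 0 ≤ c) (a b : ℝ) :
    ∫ t in b..a, mulTruncRpowDeriv k c t = a * trunc k a ^ c - b * trunc k b ^ c := by
  refine integral_eq_of_hasDerivAt_off_countable _ _
    ((countable_singleton 0).insert k |>.insert (-k))
    (continuous_mul_trunc_rpow hc).continuousOn (fun t ht ↦ hasDerivAt_mul_trunc_rpow ?_ ?_) ?_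
  · exact fun h ↦ ht.2 (by simp [h])
  · intro h
    rcases (abs_eq hk).1 h with h | h <;> exact ht.2 (by simp [h])
  · rw [intervalIntegrable_iff, uIoc]
    exact integrable_mulTruncRpowDeriv hk hc

theorem mulTruncRpowDeriv_rpow_le (hk : 0 ≤ k) (hc : 0 ≤ c) (hp : 1 ≤ p) (t : ℝ) :
    (c * p + 1) / (c + 1) ^ p * mulTruncRpowDeriv k c t ^ p ≤ mulTruncRpowDeriv k (c * p) t := by
  have hc1 : 0 < (c + 1) ^ p := by positivity
  unfold mulTruncRpowDeriv
  split_ifs with h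
  · rw [mul_rpow (by linarith) (by positivity), ← rpow_mul (abs_nonneg t)]
    field_simp
    rfl
  · rw [← rpow_mul hk]
    refine mul_le_of_le_one_left (by positivity) ((div_le_one hc1).2 ?_)
    simpa [add_comm, mul_comm] using one_add_mul_self_le_rpow_one_add (by linarith : -1 ≤ c) hp

theorem mul_trunc_rpow_sub_rpow_le (hk : 0 ≤ k) (hc : 0 ≤ c) (hp : 1 ≤ p) {a b : ℝ} (hab : b ≤ a) :
    (c * p + 1) / (c + 1) ^ p * (a * trunc k a ^ c - b * trunc k b ^ c) ^ p ≤
      (a * trunc k a ^ (c * p) - b * trunc k b ^ (c * p)) * (a - b) ^ (p - 1) := by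
  set μ := volume.restrict (Ioc b a)
  have hcp : 0 ≤ c * p := mul_nonneg hc (by linarith)
  have hF : ∀ {d}, 0 ≤ d →
      a * trunc k a ^ d - b * trunc k b ^ d = ∫ t, mulTruncRpowDeriv k d t ∂μ :=
    fun hd ↦ by rw [← integral_mulTruncRpowDeriv hk hd, intervalIntegral.integral_of_le hab]
  have hμ : μ.real univ = a - b := by simp [μ, hab]
  rw [hF hc, hF hcp]
  calc (c * p + 1) / (c + 1) ^ p * (∫ t, mulTruncRpowDeriv k c t ∂μ) ^ p
      ≤ (c * p + 1) / (c + 1) ^ p *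
          ((a - b) ^ (p - 1) * ∫ t, mulTruncRpowDeriv k c t ^ p ∂μ) := by
        gcongr
        rw [← hμ]
        exact rpow_integral_le_mul_integral_rpow hp (ae_of_all _ (mulTruncRpowDeriv_nonneg hk hc))
          (integrable_mulTruncRpowDeriv hk hc)
          (integrable_mulTruncRpowDeriv_rpow hk hc (by linarith))
    _ = (a - b) ^ (p - 1) *
          ∫ t, (c * p + 1) / (c + 1) ^ p * mulTruncRpowDeriv k c t ^ p ∂μ := by
        rw [integral_const_mul]
        ring
    _ ≤ (a - b) ^ (p - 1) * ∫ t, mulTruncRpowDeriv k (c * p) t ∂μ := by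
        refine mul_le_mul_of_nonneg_left ?_ (rpow_nonneg (sub_nonneg.2 hab) _)
        exact integral_mono ((integrable_mulTruncRpowDeriv_rpow hk hc (by linarith)).const_mul _)
          (integrable_mulTruncRpowDeriv hk hcp)
          (mulTruncRpowDeriv_rpow_le hk hc hp)
    _ = _ := mul_comm _ _

end

/-- for all `a ≥ b`, `p ≥ 1`, `ρ ≥ p`, `k > 0`,
`(p^p(ρ+1−p)/ρ^p)(a|a|_k^{ρ/p−1} − b|b|_k^{ρ/p−1})^p
  ≤ (a|a|_k^{ρ−p} − b|b|_k^{ρ−p})(a−b)^{p−1}`. -/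
theorem elementary_truncation_inequality
    (a b p ρ k : ℝ) (hab : b ≤ a) (hp : 1 ≤ p) (hρ : p ≤ ρ) (hk : 0 < k) :
    p ^ p * (ρ + 1 - p) / ρ ^ p *
        (a * trunc k a ^ (ρ / p - 1) - b * trunc k b ^ (ρ / p - 1)) ^ p ≤
      (a * trunc k a ^ (ρ - p) - b * trunc k b ^ (ρ - p)) * (a - b) ^ (p - 1) := by
  have hp0 : 0 < p := by linarith
  have hc : 0 ≤ ρ / p - 1 := by rw [sub_nonneg, one_le_div hp0]; exact hρ
  have hcp : (ρ / p - 1) * p = ρ - p := by field_simp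
  have hC : p ^ p * (ρ + 1 - p) / ρ ^ p = ((ρ / p - 1) * p + 1) / (ρ / p - 1 + 1) ^ p := by
    rw [hcp, sub_add_cancel, div_rpow (by linarith) hp0.le]
    field_simp
    ring
  rw [hC]
  simpa only [hcp] using mul_trunc_rpow_sub_rpow_le hk.le hc hp hab

end
end

section
/- Fix η>1 and define f(t)=t^{η−1}log(1+t) for t≥0 (and f(t)=0 for t<0), with primitive F(t)=∫₀ᵗ f(s)ds. Then (a) lim_{t→∞} F(t)/t^η = ∞, so f is superlinear at infinity in the sense of (3.2); but (b) f does not satisfy the Ambrosetti–Rabinowitz condition: there exist no r>0 and θ>η such that 0 < θF(t) ≤ t f(t) for all t ≥ r. -/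
/-! Since `f` is nondecreasing, `F t ≥ (t / 2) f (t / 2) = (t / 2) ^ η log (1 + t / 2)`, so `F t / t ^ η`
grows like a logarithm. If `θ F ≤ t f` held on `[r, ∞)`, then `F t / t ^ θ` would be nondecreasing there,
hence bounded below by a positive constant; but `F t ≤ t f t = t ^ η log (1 + t)` and
`log (1 + t) = o(t ^ (θ - η))`. -/

open MeasureTheory Set Filter Topology

noncomputable section

/-- `f(t) = t^{η−1} log(1+t)` for `t ≥ 0`, and `0` for `t < 0`. -/
def f15 (η t : ℝ) : ℝ := if 0 ≤ t then t ^ (η - 1) * Real.log (1 + t) else 0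

/-- `F(t) = ∫₀ᵗ f(τ) dτ`. -/
def F15 (η t : ℝ) : ℝ := ∫ τ in (0:ℝ)..t, f15 η τ

open Real

theorem MonotoneOn.integral_le_sub_mul {g : ℝ → ℝ} {a b : ℝ} (hab : a ≤ b)
    (hg : MonotoneOn g (Icc a b)) : ∫ x in a..b, g x ≤ (b - a) * g b := by
  have hint : IntervalIntegrable g volume a b := (uIcc_of_le hab ▸ hg).intervalIntegrable
  simpa using intervalIntegral.integral_mono_on hab hint intervalIntegrable_const
    fun x hx => hg hx ⟨hab, le_rfl⟩ hx.2

theorem MonotoneOn.sub_mul_le_integral {g : ℝ → ℝ} {a b c : ℝ} (hac : a ≤ c) (hcb : c ≤ b)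
    (hg : MonotoneOn g (Icc a b)) (hga : 0 ≤ g a) : (b - c) * g c ≤ ∫ x in a..b, g x := by
  have hint : ∀ {u v}, a ≤ u → u ≤ v → v ≤ b → IntervalIntegrable g volume u v :=
    fun hau huv hvb => (uIcc_of_le huv ▸ hg.mono (Icc_subset_Icc hau hvb)).intervalIntegrable
  have hleft : 0 ≤ ∫ x in a..c, g x :=
    intervalIntegral.integral_nonneg hac fun x hx =>
      hga.trans (hg ⟨le_rfl, hac.trans hcb⟩ ⟨hx.1, hx.2.trans hcb⟩ hx.1)
  have hright : (b - c) * g c ≤ ∫ x in c..b, g x := by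
    simpa using intervalIntegral.integral_mono_on hcb intervalIntegrable_const
      (hint hac hcb le_rfl) fun x hx => hg ⟨hac, hcb⟩ ⟨hac.trans hx.1, hx.2⟩ hx.1
  rw [← intervalIntegral.integral_add_adjacent_intervals (hint le_rfl hac hcb)
    (hint hac hcb le_rfl)]
  linarith

theorem monotoneOn_div_rpow_of_mul_le_mul_deriv {F f : ℝ → ℝ} {r θ : ℝ} (hr : 0 < r)
    (hF : ∀ t ∈ Ici r, HasDerivAt F (f t) t) (hAR : ∀ t ∈ Ici r, θ * F t ≤ t * f t) :
    MonotoneOn (fun t => F t / t ^ θ) (Ici r) := by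
  have hderiv : ∀ t ∈ Ici r, HasDerivAt (fun t => F t / t ^ θ)
      ((f t * t ^ θ - F t * (θ * t ^ (θ - 1))) / (t ^ θ) ^ 2) t := fun t ht =>
    have ht0 : 0 < t := hr.trans_le ht
    (hF t ht).div (hasDerivAt_rpow_const (Or.inl ht0.ne')) (rpow_pos_of_pos ht0 θ).ne'
  refine monotoneOn_of_hasDerivWithinAt_nonneg (convex_Ici r)
    (fun t ht => (hderiv t ht).continuousAt.continuousWithinAt)
    (fun t ht => (hderiv t (interior_subset ht)).hasDerivWithinAt) fun t ht => ?_
  have ht : r ≤ t := interior_subset ht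
  have ht0 : 0 < t := hr.trans_le ht
  have hnum : f t * t ^ θ - F t * (θ * t ^ (θ - 1)) = t ^ (θ - 1) * (t * f t - θ * F t) := by
    rw [rpow_sub_one ht0.ne']
    field_simp
  rw [hnum]
  exact div_nonneg (mul_nonneg (rpow_nonneg ht0.le _) (sub_nonneg.2 (hAR t ht))) (sq_nonneg _)

theorem tendsto_log_one_add_div_rpow_atTop {δ : ℝ} (hδ : 0 < δ) :
    Tendsto (fun t => log (1 + t) / t ^ δ) atTop (𝓝 0) := by
  have hbig : (fun t => log (1 + t)) =O[atTop] log := by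
    refine Asymptotics.IsBigO.of_bound 2 ?_
    filter_upwards [eventually_ge_atTop 2] with t ht
    have h1t : 1 + t ≤ t * t := by nlinarith
    rw [norm_of_nonneg (log_nonneg (by linarith)), norm_of_nonneg (log_nonneg (by linarith)),
      two_mul, ← log_mul (by positivity) (by positivity)]
    exact log_le_log (by positivity) h1t
  exact (hbig.trans_isLittleO (isLittleO_log_rpow_atTop hδ)).tendsto_div_nhds_zero

lemma f15_of_nonneg {η t : ℝ} (ht : 0 ≤ t) : f15 η t = t ^ (η - 1) * log (1 + t) := if_pos ht

lemma f15_eq_max (η t : ℝ) : f15 η t = max t 0 ^ (η - 1) * log (1 + max t 0) := by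
  rcases le_or_gt 0 t with ht | ht
  · rw [f15_of_nonneg ht, max_eq_left ht]
  · simp [f15, ht.not_ge, ht.le]

lemma f15_nonneg (η t : ℝ) : 0 ≤ f15 η t := by
  rw [f15_eq_max]
  have := le_max_right t 0
  exact mul_nonneg (rpow_nonneg this _) (log_nonneg (by linarith))

lemma continuous_f15 {η : ℝ} (hη : 1 ≤ η) : Continuous (f15 η) := by
  rw [funext (f15_eq_max η)]
  refine ((continuous_id.max continuous_const).rpow_const fun _ => Or.inr (by linarith)).mul
    ((continuous_const.add (continuous_id.max continuous_const)).log fun t =>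
      (by linarith [le_max_right t 0] : (0 : ℝ) < 1 + max t 0).ne')

lemma monotoneOn_f15 {η : ℝ} (hη : 1 ≤ η) : MonotoneOn (f15 η) (Ici 0) := by
  intro s (hs : 0 ≤ s) t (ht : 0 ≤ t) hst
  rw [f15_of_nonneg hs, f15_of_nonneg ht]
  gcongr
  exact log_nonneg (by linarith)

lemma mul_f15 {η t : ℝ} (hη : η ≠ 0) (ht : 0 ≤ t) : t * f15 η t = t ^ η * log (1 + t) := by
  rw [f15_of_nonneg ht, ← mul_assoc, ← rpow_one_add' ht (by simpa using hη)]
  ring_nf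

lemma hasDerivAt_F15 {η : ℝ} (hη : 1 ≤ η) (t : ℝ) : HasDerivAt (F15 η) (f15 η t) t :=
  ((continuous_f15 hη).integral_hasStrictDerivAt 0 t).hasDerivAt

lemma F15_nonneg (η : ℝ) {t : ℝ} (ht : 0 ≤ t) : 0 ≤ F15 η t :=
  intervalIntegral.integral_nonneg ht fun x _ => f15_nonneg η x

lemma F15_le {η t : ℝ} (hη : 1 ≤ η) (ht : 0 ≤ t) : F15 η t ≤ t ^ η * log (1 + t) := by
  rw [← mul_f15 (by linarith) ht]
  simpa [F15] using ((monotoneOn_f15 hη).mono Icc_subset_Ici_self).integral_le_sub_mul ht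

lemma half_rpow_mul_log_le_F15 {η t : ℝ} (hη : 1 ≤ η) (ht : 0 ≤ t) :
    (t / 2) ^ η * log (1 + t / 2) ≤ F15 η t := by
  rw [← mul_f15 (by linarith) (by linarith)]
  have := ((monotoneOn_f15 hη).mono (Icc_subset_Ici_self : Icc 0 t ⊆ Ici 0)).sub_mul_le_integral
    (by linarith : 0 ≤ t / 2) (by linarith) (f15_nonneg η 0)
  rwa [show t - t / 2 = t / 2 by ring] at this

theorem tendsto_F15_div_rpow_atTop {η : ℝ} (hη : 1 ≤ η) :
    Tendsto (fun t => F15 η t / t ^ η) atTop atTop := by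
  have hlog : Tendsto (fun t : ℝ => log (1 + t / 2) / 2 ^ η) atTop atTop :=
    (tendsto_log_atTop.comp (tendsto_atTop_add_const_left _ 1
      (tendsto_id.atTop_div_const two_pos))).atTop_div_const (by positivity)
  refine tendsto_atTop_mono' _ ?_ hlog
  filter_upwards [eventually_gt_atTop 0] with t ht
  rw [le_div_iff₀ (by positivity)]
  calc log (1 + t / 2) / 2 ^ η * t ^ η = (t / 2) ^ η * log (1 + t / 2) := by
        rw [div_rpow ht.le zero_le_two]; ring
    _ ≤ F15 η t := half_rpow_mul_log_le_F15 hη ht.le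

theorem tendsto_F15_div_rpow_nhds_zero {η θ : ℝ} (hη : 1 ≤ η) (hθ : η < θ) :
    Tendsto (fun t => F15 η t / t ^ θ) atTop (𝓝 0) := by
  refine tendsto_of_tendsto_of_tendsto_of_le_of_le' tendsto_const_nhds
    (tendsto_log_one_add_div_rpow_atTop (sub_pos.2 hθ)) ?_ ?_
  · filter_upwards [eventually_ge_atTop 0] with t ht
    exact div_nonneg (F15_nonneg η ht) (rpow_nonneg ht _)
  · filter_upwards [eventually_gt_atTop 0] with t ht
    calc F15 η t / t ^ θ ≤ t ^ η * log (1 + t) / t ^ θ := by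
          gcongr; exact F15_le hη ht.le
      _ = log (1 + t) / t ^ (θ - η) := by
          rw [rpow_sub ht]; field_simp

/-- `f(t)=t^{η−1}log(1+t)` is superlinear at infinity in the sense of (3.2),
i.e. `F(t)/t^η → ∞`, but does not satisfy the Ambrosetti–Rabinowitz condition with any
exponent `θ > η`. -/
theorem log_example_superlinear_but_not_AR (η : ℝ) (hη : 1 < η) :
    Tendsto (fun t : ℝ => F15 η t / t ^ η) atTop atTop ∧
    ¬ ∃ r > (0:ℝ), ∃ θ : ℝ, η < θ ∧ ∀ t : ℝ, r ≤ t →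
        0 < θ * F15 η t ∧ θ * F15 η t ≤ t * f15 η t := by
  refine ⟨tendsto_F15_div_rpow_atTop hη.le, ?_⟩
  rintro ⟨r, hr, θ, hθ, hAR⟩
  have hmono : MonotoneOn (fun t => F15 η t / t ^ θ) (Ici r) :=
    monotoneOn_div_rpow_of_mul_le_mul_deriv hr (fun t _ => hasDerivAt_F15 hη.le t)
      fun t ht => (hAR t ht).2
  have hpos : 0 < F15 η r / r ^ θ :=
    div_pos (pos_of_mul_pos_right (hAR r le_rfl).1 (by linarith)) (rpow_pos_of_pos hr θ)
  obtain ⟨t, hsmall, hrt⟩ := (((tendsto_F15_div_rpow_nhds_zero hη.le hθ).eventually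
    (gt_mem_nhds hpos)).and (eventually_ge_atTop r)).exists
  exact (hmono self_mem_Ici hrt hrt).not_gt hsmall

end
end
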